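/- Scaled one-sided 2D HLLC positivity (Lemma 4.2): for any parameters ζ₁, ζ₂ > 0, any two admissible states U₀, U₁ ∈ G, any unit vector n ∈ ℝ², and any λ > 0 satisfying λ · max{α_n(U₀), α_n(U₁)} ≤ 1, one has ζ₁U₀ − λ(F^hllc(ζ₁U₀, ζ₂U₁; n) − F(ζ₁U₀)·n) ∈ G. -/

import Mathlib

open scoped RealInnerProductSpace

noncomputable section

/-- A 2D state `U = (ρ, m, E)` with momentum vector `m ∈ ℝ²`. -/
abbrev St2 : Type := ℝ × EuclideanSpace ℝ (Fin 2) × ℝ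

/-- The admissible set `G = {(ρ, m, E) : ρ > 0, E − ‖m‖²/(2ρ) > 0}`. -/
def admG2 : Set St2 := {U | 0 < U.1 ∧ 0 < U.2.2 - ‖U.2.1‖ ^ 2 / (2 * U.1)}

/-- The pressure `p = (γ−1)(E − ‖m‖²/(2ρ))`. -/
def press2 (γ : ℝ) (U : St2) : ℝ := (γ - 1) * (U.2.2 - ‖U.2.1‖ ^ 2 / (2 * U.1))

/-- The sound speed `√(γ p / ρ)`. -/
def sound2 (γ : ℝ) (U : St2) : ℝ := Real.sqrt (γ * press2 γ U / U.1)

/-- The normal velocity `q(U) = u·n = (m·n)/ρ`. -/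
def qvel (U : St2) (n : EuclideanSpace ℝ (Fin 2)) : ℝ := ⟪U.2.1, n⟫ / U.1

/-- The directional Euler flux `F(U)·n = (ρq, q m + p n, (E+p)q)`. -/
def eulerFn (γ : ℝ) (U : St2) (n : EuclideanSpace ℝ (Fin 2)) : St2 :=
  (U.1 * qvel U n, qvel U n • U.2.1 + press2 γ U • n,
    (U.2.2 + press2 γ U) * qvel U n)

/-- `α_n(U) = |u·n| + √(γp/ρ)`. -/
def alphaN (γ : ℝ) (U : St2) (n : EuclideanSpace ℝ (Fin 2)) : ℝ :=
  |qvel U n| + sound2 γ U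

/-- Left wave speed of the 2D HLLC flux. -/
def SL2 (γ : ℝ) (UL UR : St2) (n : EuclideanSpace ℝ (Fin 2)) : ℝ :=
  min (qvel UL n - sound2 γ UL) (qvel UR n - sound2 γ UR)

/-- Right wave speed of the 2D HLLC flux. -/
def SR2 (γ : ℝ) (UL UR : St2) (n : EuclideanSpace ℝ (Fin 2)) : ℝ :=
  max (qvel UL n + sound2 γ UL) (qvel UR n + sound2 γ UR)

/-- Middle wave speed of the 2D HLLC flux. -/
def Sstar2 (γ : ℝ) (UL UR : St2) (n : EuclideanSpace ℝ (Fin 2)) : ℝ :=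
  (press2 γ UR - press2 γ UL + UL.1 * qvel UL n * (SL2 γ UL UR n - qvel UL n)
      - UR.1 * qvel UR n * (SR2 γ UL UR n - qvel UR n)) /
    (UL.1 * (SL2 γ UL UR n - qvel UL n) - UR.1 * (SR2 γ UL UR n - qvel UR n))

/-- 2D HLLC intermediate state. -/
def Ustar2 (γ : ℝ) (Si Sst : ℝ) (Ui : St2) (n : EuclideanSpace ℝ (Fin 2)) : St2 :=
  ((Si - qvel Ui n) / (Si - Sst)) •
    ((Ui.1, Ui.2.1 + (Ui.1 * (Sst - qvel Ui n)) • n,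
      Ui.2.2 + Ui.1 * (Sst - qvel Ui n) *
        (Sst + press2 γ Ui / (Ui.1 * (Si - qvel Ui n)))) : St2)

/-- 2D intermediate flux `F_{*i} = F(U_i)·n + S_i (U_{*i} − U_i)`. -/
def Fstar2 (γ : ℝ) (Si Sst : ℝ) (Ui : St2) (n : EuclideanSpace ℝ (Fin 2)) : St2 :=
  eulerFn γ Ui n + Si • (Ustar2 γ Si Sst Ui n - Ui)

/-- The 2D HLLC numerical flux in direction `n`. -/
def Fhllc2 (γ : ℝ) (UL UR : St2) (n : EuclideanSpace ℝ (Fin 2)) : St2 :=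
  if 0 ≤ SL2 γ UL UR n then eulerFn γ UL n
  else if 0 ≤ Sstar2 γ UL UR n then Fstar2 γ (SL2 γ UL UR n) (Sstar2 γ UL UR n) UL n
  else if 0 ≤ SR2 γ UL UR n then Fstar2 γ (SR2 γ UL UR n) (Sstar2 γ UL UR n) UR n
  else eulerFn γ UR n

end

/-! The admissible set `G` is a convex cone, since `E - ‖m‖²/(2ρ)` is superadditive. Because the
wave speeds are ordered, `S_L < S_* < S_R`, and the contact jump satisfies
`F_{*R} - F_{*L} = S_* (U_{*R} - U_{*L})`, the HLLC flux difference `F^hllc - F(U_L)` is the sum of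
`min(S, 0)` times the jumps across the three waves. Hence the one-sided update is
`(1 + λS_L⁻) U_L + λ(S_*⁻ - S_L⁻) U_{*L} + λ(S_R⁻ - S_*⁻) U_{*R} - λS_R⁻ U_R` with `S⁻ = min(S, 0)`,
a convex combination by the CFL condition, which is invariant under scaling the states.
The intermediate states lie in `G`: their internal energy is a positive multiple of a quadratic in
`S_* - q` with negative discriminant, because `|S_i - q_i| ≥ c_i` and `γ > 1`. -/

theorem Convex.sub_smul_wave_jumps_mem {E : Type*} [AddCommGroup E] [Module ℝ E] {s : Set E}
    (hs : Convex ℝ s) {x₀ x₁ x₂ x₃ : E} (h₀ : x₀ ∈ s) (h₁ : x₁ ∈ s) (h₂ : x₂ ∈ s)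
    (h₃ : x₃ ∈ s) {lam a b c : ℝ} (hlam : 0 ≤ lam) (ha : -1 ≤ lam * a) (hab : a ≤ b)
    (hbc : b ≤ c) (hc : c ≤ 0) :
    x₀ - lam • (a • (x₁ - x₀) + b • (x₂ - x₁) + c • (x₃ - x₂)) ∈ s := by
  have hcombo : x₀ - lam • (a • (x₁ - x₀) + b • (x₂ - x₁) + c • (x₃ - x₂))
      = ∑ i, ![1 + lam * a, lam * (b - a), lam * (c - b), -(lam * c)] i • ![x₀, x₁, x₂, x₃] i := by
    simp only [Fin.sum_univ_four, Matrix.cons_val]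
    module
  rw [hcombo]
  refine hs.sum_mem (fun i _ => ?_) ?_ (fun i _ => ?_)
  · fin_cases i <;> simp only [Fin.reduceFinMk, Fin.zero_eta, Fin.mk_one, Matrix.cons_val] <;>
      nlinarith
  · simp only [Fin.sum_univ_four, Matrix.cons_val]; ring
  · fin_cases i <;> assumption

noncomputable section

def intEnergy2 (U : St2) : ℝ := U.2.2 - ‖U.2.1‖ ^ 2 / (2 * U.1)

theorem press2_eq_mul_intEnergy2 (γ : ℝ) (U : St2) : press2 γ U = (γ - 1) * intEnergy2 U := rfl

theorem intEnergy2_smul (c : ℝ) (U : St2) : intEnergy2 (c • U) = c * intEnergy2 U := by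
  rcases eq_or_ne c 0 with rfl | hc
  · simp [intEnergy2]
  simp only [intEnergy2, Prod.smul_fst, Prod.smul_snd, smul_eq_mul, norm_smul,
    Real.norm_eq_abs, mul_pow, sq_abs]
  field_simp

theorem add_sq_div_add_le (a b : ℝ) {x y : ℝ} (hx : 0 < x) (hy : 0 < y) :
    (a + b) ^ 2 / (x + y) ≤ a ^ 2 / x + b ^ 2 / y := by
  rw [div_add_div _ _ hx.ne' hy.ne', div_le_div_iff₀ (by positivity) (by positivity)]
  nlinarith [sq_nonneg (a * y - b * x), mul_pos hx hy]

theorem le_intEnergy2_add {U V : St2} (hU : 0 < U.1) (hV : 0 < V.1) :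
    intEnergy2 U + intEnergy2 V ≤ intEnergy2 (U + V) := by
  have hkin : ‖U.2.1 + V.2.1‖ ^ 2 / (2 * U.1 + 2 * V.1)
      ≤ ‖U.2.1‖ ^ 2 / (2 * U.1) + ‖V.2.1‖ ^ 2 / (2 * V.1) :=
    calc ‖U.2.1 + V.2.1‖ ^ 2 / (2 * U.1 + 2 * V.1)
        ≤ (‖U.2.1‖ + ‖V.2.1‖) ^ 2 / (2 * U.1 + 2 * V.1) := by
          gcongr; exact norm_add_le _ _
      _ ≤ _ := add_sq_div_add_le _ _ (by positivity) (by positivity)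
  simp only [intEnergy2, Prod.fst_add, Prod.snd_add, mul_add] at hkin ⊢
  linarith

def admG2Cone : ConvexCone ℝ St2 where
  carrier := admG2
  smul_mem' c hc U hU :=
    ⟨mul_pos hc hU.1, show 0 < intEnergy2 (c • U) from
      intEnergy2_smul c U ▸ mul_pos hc hU.2⟩
  add_mem' _ hU _ hV :=
    ⟨add_pos hU.1 hV.1, (add_pos hU.2 hV.2).trans_le (le_intEnergy2_add hU.1 hV.1)⟩

theorem convex_admG2 : Convex ℝ admG2 := admG2Cone.convex

theorem qvel_smul {c : ℝ} (hc : c ≠ 0) (U : St2) (n : EuclideanSpace ℝ (Fin 2)) :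
    qvel (c • U) n = qvel U n := by
  simp only [qvel, Prod.smul_fst, Prod.smul_snd, smul_eq_mul, real_inner_smul_left,
    mul_div_mul_left _ _ hc]

theorem press2_smul (γ c : ℝ) (U : St2) :
    press2 γ (c • U) = c * press2 γ U := by
  rw [press2_eq_mul_intEnergy2, press2_eq_mul_intEnergy2, intEnergy2_smul]; ring

theorem sound2_smul (γ : ℝ) {c : ℝ} (hc : c ≠ 0) (U : St2) :
    sound2 γ (c • U) = sound2 γ U := by
  simp only [sound2, press2_smul, Prod.smul_fst, smul_eq_mul, mul_left_comm γ c,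
    mul_div_mul_left _ _ hc]

theorem alphaN_smul (γ : ℝ) {c : ℝ} (hc : c ≠ 0) (U : St2) (n : EuclideanSpace ℝ (Fin 2)) :
    alphaN γ (c • U) n = alphaN γ U n := by
  rw [alphaN, alphaN, qvel_smul hc, sound2_smul γ hc]

theorem alphaN_nonneg (γ : ℝ) (U : St2) (n : EuclideanSpace ℝ (Fin 2)) : 0 ≤ alphaN γ U n :=
  add_nonneg (abs_nonneg _) (Real.sqrt_nonneg _)

theorem press2_pos {γ : ℝ} (hγ : 1 < γ) {U : St2} (hU : U ∈ admG2) : 0 < press2 γ U :=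
  mul_pos (sub_pos.mpr hγ) hU.2

theorem sound2_pos {γ : ℝ} (hγ : 1 < γ) {U : St2} (hU : U ∈ admG2) : 0 < sound2 γ U :=
  Real.sqrt_pos.mpr (div_pos (mul_pos (by linarith) (press2_pos hγ hU)) hU.1)

theorem sound2_sq_mul {γ : ℝ} (hγ : 1 < γ) {U : St2} (hU : U ∈ admG2) :
    sound2 γ U ^ 2 * U.1 = γ * press2 γ U := by
  rw [sound2, Real.sq_sqrt (div_pos (mul_pos (by linarith) (press2_pos hγ hU)) hU.1).le,
    div_mul_cancel₀ _ hU.1.ne']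

theorem lt_one_div_sub_one_add_mul_sq_div_two {γ : ℝ} (hγ : 1 < γ) (t : ℝ) :
    t < 1 / (γ - 1) + γ * t ^ 2 / 2 := by
  have hγ0 : 0 < γ := by linarith
  have hsq : t - 1 / (2 * γ) ≤ γ * t ^ 2 / 2 := by
    rw [sub_le_iff_le_add, ← sub_nonneg]
    have : γ * t ^ 2 / 2 + 1 / (2 * γ) - t = (γ * t - 1) ^ 2 / (2 * γ) := by
      field_simp; ring
    rw [this]; positivity
  have hinv : 1 / (2 * γ) < 1 / (γ - 1) := one_div_lt_one_div_of_lt (by linarith) (by linarith)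
  linarith

theorem star_energy_pos {γ ρ p c a : ℝ} (hγ : 1 < γ) (hp : 0 < p) (hc : 0 < c)
    (hc2 : c ^ 2 * ρ = γ * p) (hca : c ≤ |a|) (s : ℝ) :
    0 < p / (γ - 1) + ρ * s ^ 2 / 2 + s * (p / a) := by
  set t := |s| / c
  have hcross : -(p * t) ≤ s * (p / a) := by
    refine neg_le_of_abs_le ?_
    calc |s * (p / a)| = |s| * p / |a| := by rw [abs_mul, abs_div, abs_of_pos hp, mul_div_assoc]
      _ ≤ |s| * p / c := by gcongr
      _ = p * t := by ring
  have hkin : ρ * s ^ 2 = γ * p * t ^ 2 := by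
    rw [← sq_abs s, show |s| = c * t by simp only [t]; field_simp]
    linear_combination t ^ 2 * hc2
  have hquad := mul_lt_mul_of_pos_left (lt_one_div_sub_one_add_mul_sq_div_two hγ t) hp
  have hexpand : p * (1 / (γ - 1) + γ * t ^ 2 / 2) = p / (γ - 1) + ρ * s ^ 2 / 2 := by
    rw [hkin]; ring
  linarith

theorem intEnergy2_Ustar2 (γ Si Sst : ℝ) {U : St2} (hρ : U.1 ≠ 0)
    {n : EuclideanSpace ℝ (Fin 2)} (hn : ‖n‖ = 1) :
    intEnergy2 (Ustar2 γ Si Sst U n) = (Si - qvel U n) / (Si - Sst) *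
      (intEnergy2 U + U.1 * (Sst - qvel U n) ^ 2 / 2
        + (Sst - qvel U n) * (press2 γ U / (Si - qvel U n))) := by
  rw [Ustar2, intEnergy2_smul]
  congr 1
  obtain ⟨ρ, m, E⟩ := U
  have hinner : ⟪m, n⟫ = ρ * qvel (ρ, m, E) n := by
    rw [qvel]; field_simp
  simp only [intEnergy2] at hρ ⊢
  rw [norm_add_sq_real, real_inner_smul_right, hinner, norm_smul, hn, Real.norm_eq_abs,
    mul_one, sq_abs]
  field_simp
  ring

theorem Ustar2_mem_admG2 {γ : ℝ} (hγ : 1 < γ) {U : St2} (hU : U ∈ admG2)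
    {n : EuclideanSpace ℝ (Fin 2)} (hn : ‖n‖ = 1) {Si Sst : ℝ}
    (hsonic : sound2 γ U ≤ |Si - qvel U n|) (hk : 0 < (Si - qvel U n) / (Si - Sst)) :
    Ustar2 γ Si Sst U n ∈ admG2 := by
  have he : intEnergy2 U = press2 γ U / (γ - 1) := by
    rw [press2_eq_mul_intEnergy2, mul_div_cancel_left₀ _ (sub_pos.mpr hγ).ne']
  refine ⟨mul_pos hk hU.1, show 0 < intEnergy2 _ from ?_⟩
  rw [intEnergy2_Ustar2 γ Si Sst hU.1.ne' hn, he]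
  exact mul_pos hk (star_energy_pos hγ (press2_pos hγ hU) (sound2_pos hγ hU)
    (sound2_sq_mul hγ hU) hsonic _)

def pStar2 (γ Si Sst : ℝ) (U : St2) (n : EuclideanSpace ℝ (Fin 2)) : ℝ :=
  press2 γ U + U.1 * (Si - qvel U n) * (Sst - qvel U n)

theorem Fstar2_eq {γ Si Sst : ℝ} {U : St2} {n : EuclideanSpace ℝ (Fin 2)} (hρ : U.1 ≠ 0)
    (ha : Si - qvel U n ≠ 0) (hr : Si - Sst ≠ 0) :
    Fstar2 γ Si Sst U n =
      Sst • Ustar2 γ Si Sst U n + pStar2 γ Si Sst U n • ((0, n, Sst) : St2) := by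
  simp only [Fstar2, Ustar2, eulerFn, pStar2]
  generalize qvel U n = q at *
  refine Prod.ext ?_ (Prod.ext ?_ ?_)
  · simp only [Prod.fst_add, Prod.smul_fst, Prod.fst_sub, smul_eq_mul]
    field_simp
    ring
  · simp only [Prod.snd_add, Prod.smul_snd, Prod.snd_sub, Prod.fst_add, Prod.smul_fst,
      Prod.fst_sub]
    match_scalars <;> field_simp <;> ring
  · simp only [Prod.snd_add, Prod.smul_snd, Prod.snd_sub, smul_eq_mul]
    field_simp
    ring

theorem SL2_le_left (γ : ℝ) (UL UR : St2) (n : EuclideanSpace ℝ (Fin 2)) :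
    SL2 γ UL UR n ≤ qvel UL n - sound2 γ UL := min_le_left _ _

theorem SL2_le_right (γ : ℝ) (UL UR : St2) (n : EuclideanSpace ℝ (Fin 2)) :
    SL2 γ UL UR n ≤ qvel UR n - sound2 γ UR := min_le_right _ _

theorem left_le_SR2 (γ : ℝ) (UL UR : St2) (n : EuclideanSpace ℝ (Fin 2)) :
    qvel UL n + sound2 γ UL ≤ SR2 γ UL UR n := le_max_left _ _

theorem right_le_SR2 (γ : ℝ) (UL UR : St2) (n : EuclideanSpace ℝ (Fin 2)) :
    qvel UR n + sound2 γ UR ≤ SR2 γ UL UR n := le_max_right _ _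

section HLLC

variable {γ : ℝ} {UL UR : St2} {n : EuclideanSpace ℝ (Fin 2)}

theorem neg_max_alphaN_le_min_SL2_zero :
    -max (alphaN γ UL n) (alphaN γ UR n) ≤ min (SL2 γ UL UR n) 0 := by
  refine le_min ?_ (neg_nonpos.mpr (le_max_of_le_left (alphaN_nonneg γ UL n)))
  rw [← min_neg_neg, SL2]
  exact min_le_min (by rw [alphaN]; linarith [neg_abs_le (qvel UL n)])
    (by rw [alphaN]; linarith [neg_abs_le (qvel UR n)])

theorem Sstar2_denom_neg (hγ : 1 < γ) (hUL : UL ∈ admG2) (hUR : UR ∈ admG2) :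
    UL.1 * (SL2 γ UL UR n - qvel UL n) - UR.1 * (SR2 γ UL UR n - qvel UR n) < 0 := by
  have hSL := SL2_le_left γ UL UR n
  have hSR := right_le_SR2 γ UL UR n
  have hcL := sound2_pos hγ hUL
  have hcR := sound2_pos hγ hUR
  nlinarith [hUL.1, hUR.1]

theorem SL2_lt_Sstar2 (hγ : 1 < γ) (hUL : UL ∈ admG2) (hUR : UR ∈ admG2) :
    SL2 γ UL UR n < Sstar2 γ UL UR n := by
  rw [Sstar2, lt_div_iff_of_neg (Sstar2_denom_neg hγ hUL hUR)]
  -- `S_L D - N = ρ_L (S_L - q_L)² + ρ_R (S_R - q_R)(q_R - S_L) + p_L - p_R`, and the middle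
  -- term is at least `ρ_R c_R² = γ p_R`
  have hSL := SL2_le_right γ UL UR n
  have hSR := right_le_SR2 γ UL UR n
  have hc := sound2_pos hγ hUR
  have hcR : UR.1 * sound2 γ UR ^ 2 ≤
      UR.1 * ((SR2 γ UL UR n - qvel UR n) * (qvel UR n - SL2 γ UL UR n)) := by
    rw [sq]; gcongr <;> linarith [hUR.1]
  nlinarith [sound2_sq_mul hγ hUR, press2_pos hγ hUL, press2_pos hγ hUR,
    mul_nonneg hUL.1.le (sq_nonneg (SL2 γ UL UR n - qvel UL n))]

theorem Sstar2_lt_SR2 (hγ : 1 < γ) (hUL : UL ∈ admG2) (hUR : UR ∈ admG2) :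
    Sstar2 γ UL UR n < SR2 γ UL UR n := by
  rw [Sstar2, div_lt_iff_of_neg (Sstar2_denom_neg hγ hUL hUR)]
  have hSL := SL2_le_left γ UL UR n
  have hSR := left_le_SR2 γ UL UR n
  have hc := sound2_pos hγ hUL
  have hcL : UL.1 * sound2 γ UL ^ 2 ≤
      UL.1 * ((qvel UL n - SL2 γ UL UR n) * (SR2 γ UL UR n - qvel UL n)) := by
    rw [sq]; gcongr <;> linarith [hUL.1]
  nlinarith [sound2_sq_mul hγ hUL, press2_pos hγ hUL, press2_pos hγ hUR,
    mul_nonneg hUR.1.le (sq_nonneg (SR2 γ UL UR n - qvel UR n))]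

theorem Ustar2_left_mem_admG2 (hγ : 1 < γ) (hUL : UL ∈ admG2) (hUR : UR ∈ admG2)
    (hn : ‖n‖ = 1) : Ustar2 γ (SL2 γ UL UR n) (Sstar2 γ UL UR n) UL n ∈ admG2 := by
  have hSL := SL2_le_left γ UL UR n
  have hc := sound2_pos hγ hUL
  refine Ustar2_mem_admG2 hγ hUL hn (le_abs.mpr (Or.inr (by linarith))) ?_
  exact div_pos_of_neg_of_neg (by linarith) (sub_neg.mpr (SL2_lt_Sstar2 hγ hUL hUR))

theorem Ustar2_right_mem_admG2 (hγ : 1 < γ) (hUL : UL ∈ admG2) (hUR : UR ∈ admG2)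
    (hn : ‖n‖ = 1) : Ustar2 γ (SR2 γ UL UR n) (Sstar2 γ UL UR n) UR n ∈ admG2 := by
  have hSR := right_le_SR2 γ UL UR n
  have hc := sound2_pos hγ hUR
  refine Ustar2_mem_admG2 hγ hUR hn (le_abs.mpr (Or.inl (by linarith))) ?_
  exact div_pos (by linarith) (sub_pos.mpr (Sstar2_lt_SR2 hγ hUL hUR))

theorem pStar2_left_eq_right
    (hD : UL.1 * (SL2 γ UL UR n - qvel UL n) - UR.1 * (SR2 γ UL UR n - qvel UR n) ≠ 0) :
    pStar2 γ (SL2 γ UL UR n) (Sstar2 γ UL UR n) UL n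
      = pStar2 γ (SR2 γ UL UR n) (Sstar2 γ UL UR n) UR n := by
  have hS := div_mul_cancel₀ (press2 γ UR - press2 γ UL
    + UL.1 * qvel UL n * (SL2 γ UL UR n - qvel UL n)
    - UR.1 * qvel UR n * (SR2 γ UL UR n - qvel UR n)) hD
  rw [← Sstar2] at hS
  rw [pStar2, pStar2]
  linear_combination hS

theorem Fstar2_right_sub_left (hγ : 1 < γ) (hUL : UL ∈ admG2) (hUR : UR ∈ admG2) :
    Fstar2 γ (SR2 γ UL UR n) (Sstar2 γ UL UR n) UR n
      - Fstar2 γ (SL2 γ UL UR n) (Sstar2 γ UL UR n) UL n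
      = Sstar2 γ UL UR n • (Ustar2 γ (SR2 γ UL UR n) (Sstar2 γ UL UR n) UR n
        - Ustar2 γ (SL2 γ UL UR n) (Sstar2 γ UL UR n) UL n) := by
  have hSL := SL2_le_left γ UL UR n
  have hSR := right_le_SR2 γ UL UR n
  have hcL := sound2_pos hγ hUL
  have hcR := sound2_pos hγ hUR
  have hSLS := SL2_lt_Sstar2 (n := n) hγ hUL hUR
  have hSSR := Sstar2_lt_SR2 (n := n) hγ hUL hUR
  rw [Fstar2_eq hUR.1.ne' (by linarith) (by linarith),
    Fstar2_eq hUL.1.ne' (by linarith) (by linarith),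
    pStar2_left_eq_right (Sstar2_denom_neg hγ hUL hUR).ne]
  module

theorem Fhllc2_sub_eulerFn (hγ : 1 < γ) (hUL : UL ∈ admG2) (hUR : UR ∈ admG2) :
    Fhllc2 γ UL UR n - eulerFn γ UL n =
      min (SL2 γ UL UR n) 0 • (Ustar2 γ (SL2 γ UL UR n) (Sstar2 γ UL UR n) UL n - UL)
      + min (Sstar2 γ UL UR n) 0 • (Ustar2 γ (SR2 γ UL UR n) (Sstar2 γ UL UR n) UR n
          - Ustar2 γ (SL2 γ UL UR n) (Sstar2 γ UL UR n) UL n)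
      + min (SR2 γ UL UR n) 0 • (UR - Ustar2 γ (SR2 γ UL UR n) (Sstar2 γ UL UR n) UR n) := by
  have hSLS := SL2_lt_Sstar2 (n := n) hγ hUL hUR
  have hSSR := Sstar2_lt_SR2 (n := n) hγ hUL hUR
  have hcontact := eq_add_of_sub_eq' (Fstar2_right_sub_left (n := n) hγ hUL hUR)
  have hright : eulerFn γ UR n = Fstar2 γ (SR2 γ UL UR n) (Sstar2 γ UL UR n) UR n
      - SR2 γ UL UR n • (Ustar2 γ (SR2 γ UL UR n) (Sstar2 γ UL UR n) UR n - UR) := by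
    rw [Fstar2]; abel
  rw [Fhllc2]
  split_ifs with hSL hS hSR
  · rw [min_eq_right hSL, min_eq_right (hSL.trans hSLS.le),
      min_eq_right (hSL.trans (hSLS.trans hSSR).le)]
    simp
  · rw [min_eq_left (not_le.mp hSL).le, min_eq_right hS, min_eq_right (hS.trans hSSR.le),
      Fstar2]
    module
  · rw [min_eq_left (not_le.mp hSL).le, min_eq_left (not_le.mp hS).le, min_eq_right hSR,
      hcontact, Fstar2]
    module
  · rw [min_eq_left (not_le.mp hSL).le, min_eq_left (not_le.mp hS).le,
      min_eq_left (not_le.mp hSR).le, hright, hcontact, Fstar2]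
    module

end HLLC

end

/-- Lemma 4.2: scaled one-sided 2D HLLC positivity. -/
theorem hllc2_scaled_one_sided_positivity (γ : ℝ) (hγ : 1 < γ)
    (ζ₁ ζ₂ : ℝ) (hζ₁ : 0 < ζ₁) (hζ₂ : 0 < ζ₂)
    (U₀ U₁ : St2) (hU₀ : U₀ ∈ admG2) (hU₁ : U₁ ∈ admG2)
    (n : EuclideanSpace ℝ (Fin 2)) (hn : ‖n‖ = 1)
    (lam : ℝ) (hlam : 0 < lam)
    (hcfl : lam * max (alphaN γ U₀ n) (alphaN γ U₁ n) ≤ 1) :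
    ζ₁ • U₀ - lam • (Fhllc2 γ (ζ₁ • U₀) (ζ₂ • U₁) n - eulerFn γ (ζ₁ • U₀) n)
      ∈ admG2 := by
  have hUL : ζ₁ • U₀ ∈ admG2 := admG2Cone.smul_mem hζ₁ hU₀
  have hUR : ζ₂ • U₁ ∈ admG2 := admG2Cone.smul_mem hζ₂ hU₁
  have hcflSL : -1 ≤ lam * min (SL2 γ (ζ₁ • U₀) (ζ₂ • U₁) n) 0 := by
    have h := neg_max_alphaN_le_min_SL2_zero (γ := γ) (UL := ζ₁ • U₀) (UR := ζ₂ • U₁) (n := n)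
    rw [alphaN_smul γ hζ₁.ne', alphaN_smul γ hζ₂.ne'] at h
    nlinarith [mul_le_mul_of_nonneg_left h hlam.le]
  rw [Fhllc2_sub_eulerFn hγ hUL hUR]
  exact convex_admG2.sub_smul_wave_jumps_mem hUL (Ustar2_left_mem_admG2 hγ hUL hUR hn)
    (Ustar2_right_mem_admG2 hγ hUL hUR hn) hUR hlam.le hcflSL
    (min_le_min_right _ (SL2_lt_Sstar2 hγ hUL hUR).le)
    (min_le_min_right _ (Sstar2_lt_SR2 hγ hUL hUR).le) (min_le_right _ _)
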